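/- arXiv:1809.04250 — 6 statements merged into one kernel-verified Lean document; each statement's English description precedes it below -/
import Mathlib

section
/- Let A be a maximal monotone operator on a real Hilbert space H, β ∈ (0,1), z ∈ H, r > 0, and let (A_z)^{(β)}(x) = 2(1-β)·A((1/β)x + z) + ((1-β)/β)x. Then for any x ∈ H, the resolvent satisfies J_{r(A_z)^{(β)}}(x) = β·J_{(2r(1-β)/(β+r(1-β)))A}( x/(β+r(1-β)) + z ) − βz. -/
open scoped RealInnerProductSpace

variable {H : Type*} [NormedAddCommGroup H] [InnerProductSpace ℝ H] [CompleteSpace H]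

/-- A set-valued operator is monotone. -/
def MonotoneOp (A : H → Set H) : Prop :=
  ∀ ⦃x y x' y' : H⦄, x' ∈ A x → y' ∈ A y → 0 ≤ ⟪x - y, x' - y'⟫

/-- A set-valued operator is σ-strongly monotone. -/
def StronglyMonotoneOp (σ : ℝ) (A : H → Set H) : Prop :=
  ∀ ⦃x y x' y' : H⦄, x' ∈ A x → y' ∈ A y → σ * ‖x - y‖ ^ 2 ≤ ⟪x - y, x' - y'⟫

/-- A set-valued operator is maximal monotone. -/
def MaximalMonotoneOp (A : H → Set H) : Prop :=
  MonotoneOp A ∧ ∀ x x' : H, (∀ y y' : H, y' ∈ A y → 0 ≤ ⟪x - y, x' - y'⟫) → x' ∈ A x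

/-- The operator `(A_z)^{(β)} : x ↦ 2(1-β)·A((1/β)x + z) + ((1-β)/β)x`. -/
def pert (A : H → Set H) (z : H) (β : ℝ) : H → Set H :=
  fun x => (fun u => (2 * (1 - β)) • u + ((1 - β) / β) • x) '' A (β⁻¹ • x + z)

/-!
Both sides of the identity solve the resolvent inclusion `x ∈ y + r (A_z)^{(β)} y`: for the
right-hand side this is a direct computation from the inclusion defining `J_{sA}` at
`x / (β + r(1-β)) + z`. Since `(A_z)^{(β)}` is monotone, that inclusion has at most one
solution.
-/

section

variable {E : Type*} [NormedAddCommGroup E] [InnerProductSpace ℝ E]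

theorem MonotoneOp.eq_of_mem_add_smul {M : E → Set E} (hM : MonotoneOp M) {r : ℝ} (hr : 0 < r)
    {x p q u v : E} (hu : u ∈ M p) (hv : v ∈ M q) (hp : x = p + r • u) (hq : x = q + r • v) :
    p = q := by
  have hpq : p - q = r • (v - u) := by
    rw [smul_sub, sub_eq_sub_iff_add_eq_add, ← hp, add_comm, ← hq]
  have hle : ‖p - q‖ ^ 2 ≤ 0 :=
    calc ‖p - q‖ ^ 2 = ⟪p - q, p - q⟫ := (real_inner_self_eq_norm_sq _).symm
      _ = -(r * ⟪p - q, u - v⟫) := by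
        rw [congrArg (⟪p - q, ·⟫) hpq, real_inner_smul_right, ← neg_sub u v, inner_neg_right,
          mul_neg]
      _ ≤ 0 := neg_nonpos.mpr (mul_nonneg hr.le (hM hu hv))
  exact sub_eq_zero.mp (norm_eq_zero.mp (pow_eq_zero_iff two_ne_zero |>.mp
    (le_antisymm hle (sq_nonneg _))))

theorem MonotoneOp.pert {A : E → Set E} (hA : MonotoneOp A) (z : E) {β : ℝ} (hβ0 : 0 < β)
    (hβ1 : β ≤ 1) : MonotoneOp (pert A z β) := by
  rintro x y _ _ ⟨a, ha, rfl⟩ ⟨b, hb, rfl⟩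
  have hab : 0 ≤ ⟪x - y, a - b⟫ := by
    have h := hA ha hb
    rw [show β⁻¹ • x + z - (β⁻¹ • y + z) = β⁻¹ • (x - y) by module, real_inner_smul_left] at h
    exact nonneg_of_mul_nonneg_right h (inv_pos.mpr hβ0)
  have hexpand : (2 * (1 - β)) • a + ((1 - β) / β) • x - ((2 * (1 - β)) • b + ((1 - β) / β) • y)
      = (2 * (1 - β)) • (a - b) + ((1 - β) / β) • (x - y) := by module
  rw [hexpand, inner_add_right, real_inner_smul_right, real_inner_smul_right,
    real_inner_self_eq_norm_sq]
  have h1β : 0 ≤ 1 - β := sub_nonneg.mpr hβ1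
  positivity

theorem exists_mem_pert_of_mem_add_smul (A : E → Set E) (z : E) {β r : ℝ} (hβ : β ≠ 0)
    (hc : β + r * (1 - β) ≠ 0) {x p m : E} (hm : m ∈ A p)
    (hp : (β + r * (1 - β))⁻¹ • x + z = p + (2 * r * (1 - β) / (β + r * (1 - β))) • m) :
    ∃ m' ∈ pert A z β (β • p - β • z), x = (β • p - β • z) + r • m' := by
  have hy : β⁻¹ • (β • p - β • z) + z = p := by
    rw [smul_sub, smul_smul, smul_smul, inv_mul_cancel₀ hβ, one_smul, one_smul, sub_add_cancel]
  refine ⟨_, ⟨m, by rwa [hy], rfl⟩, ?_⟩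
  rw [eq_sub_of_add_eq hp.symm]
  match_scalars <;> field_simp <;> ring

end

theorem stmt3 (A : H → Set H) (hA : MaximalMonotoneOp A) (z : H) (β r : ℝ)
    (hβ : β ∈ Set.Ioo (0:ℝ) 1) (hr : 0 < r) (JA Jz : H → H)
    (hJA : ∀ w : H, ∃ m ∈ A (JA w), w = JA w + (2 * r * (1 - β) / (β + r * (1 - β))) • m)
    (hJz : ∀ w : H, ∃ m ∈ pert A z β (Jz w), w = Jz w + r • m) (x : H) :
    Jz x = β • JA ((β + r * (1 - β))⁻¹ • x + z) - β • z := by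
  obtain ⟨hβ0, hβ1⟩ := hβ
  have hc : β + r * (1 - β) ≠ 0 := by nlinarith
  obtain ⟨m, hm, hw⟩ := hJA ((β + r * (1 - β))⁻¹ • x + z)
  obtain ⟨m', hm', hx'⟩ := exists_mem_pert_of_mem_add_smul A z hβ0.ne' hc hm hw
  obtain ⟨n, hn, hx⟩ := hJz x
  exact (hA.1.pert z hβ0 hβ1.le).eq_of_mem_add_smul hr hn hm' hx hx'
end

section
/- Let A and B be monotone operators on a real Hilbert space H and r > 0. Then the zero set of A + B equals the image under J_{rA} of the fixed point set of the composition (2J_{rB} − I) ∘ (2J_{rA} − I), i.e., (A+B)^{-1}(0) = J_{rA}( Fix((2J_{rB} − I) ∘ (2J_{rA} − I)) ). -/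
/-!
Monotonicity makes the resolvent single-valued on the graph: `a ∈ A u` forces `J_{rA} (u + r a) = u`.
So a zero `a + b = 0` at `u` gives the point `x = u + r a`, whose reflection `2 J_{rA} x - x = u + r b`
is sent back to `u` by `J_{rB}`; being a fixed point of the composed reflections says exactly
`J_{rB} (2 J_{rA} x - x) = J_{rA} x`. Conversely, reading off the resolvent steps `x = J_{rA} x + r m`
and `2 J_{rA} x - x = J_{rA} x + r n` gives `m + n = 0` at `J_{rA} x`.
-/

open scoped RealInnerProductSpace

variable {H : Type*} [NormedAddCommGroup H] [InnerProductSpace ℝ H] [CompleteSpace H]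

section Resolvent

variable {E : Type*} [NormedAddCommGroup E] [InnerProductSpace ℝ E]

/-- `J` is a selection of the resolvent `(I + r A)⁻¹`. -/
def IsResolvent (A : E → Set E) (r : ℝ) (J : E → E) : Prop :=
  ∀ w : E, ∃ m ∈ A (J w), w = J w + r • m

lemma MonotoneOp.eq_of_add_smul_eq {A : E → Set E} (hA : MonotoneOp A) {r : ℝ} (hr : 0 < r)
    {u v a m : E} (ha : a ∈ A u) (hm : m ∈ A v) (h : u + r • a = v + r • m) : u = v := by
  have huv : u - v = r • (m - a) := by
    linear_combination (norm := module) h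
  have hmono : 0 ≤ r * ⟪m - a, a - m⟫ := by simpa [huv, real_inner_smul_left] using hA ha hm
  have ham : m - a = 0 := by
    rw [← neg_sub m a, inner_neg_right, mul_neg, neg_nonneg] at hmono
    exact real_inner_self_nonpos.mp (nonpos_of_mul_nonpos_right hmono hr)
  rwa [ham, smul_zero, sub_eq_zero] at huv

lemma IsResolvent.apply_add_smul {A : E → Set E} (hA : MonotoneOp A) {r : ℝ} (hr : 0 < r)
    {J : E → E} (hJ : IsResolvent A r J) {u a : E} (ha : a ∈ A u) : J (u + r • a) = u := by
  obtain ⟨m, hm, hJm⟩ := hJ (u + r • a)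
  exact (hA.eq_of_add_smul_eq hr ha hm hJm).symm

end Resolvent

lemma two_smul_sub_two_smul_sub_eq_self_iff {M : Type*} [AddCommGroup M] [Module ℝ M]
    (p u x : M) : (2 : ℝ) • p - ((2 : ℝ) • u - x) = x ↔ p = u := by
  rw [sub_sub_eq_add_sub, sub_eq_iff_eq_add, add_comm x, add_left_inj]
  exact smul_right_injective M two_ne_zero |>.eq_iff

theorem stmt4 (A B : H → Set H) (hA : MonotoneOp A) (hB : MonotoneOp B) (r : ℝ) (hr : 0 < r)
    (JA JB : H → H)
    (hJA : ∀ w : H, ∃ m ∈ A (JA w), w = JA w + r • m)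
    (hJB : ∀ w : H, ∃ m ∈ B (JB w), w = JB w + r • m) :
    {u : H | ∃ a ∈ A u, ∃ b ∈ B u, a + b = 0} =
      JA '' {x : H | (2:ℝ) • JB ((2:ℝ) • JA x - x) - ((2:ℝ) • JA x - x) = x} := by
  simp only [two_smul_sub_two_smul_sub_eq_self_iff]
  ext u
  constructor
  · rintro ⟨a, ha, b, hb, hab⟩
    have hJAu : JA (u + r • a) = u := IsResolvent.apply_add_smul hA hr hJA ha
    refine ⟨u + r • a, ?_, hJAu⟩
    have hrefl : (2 : ℝ) • u - (u + r • a) = u + r • b := by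
      rw [eq_neg_of_add_eq_zero_right hab]; module
    simp only [Set.mem_ofPred_eq, hJAu, hrefl]
    exact IsResolvent.apply_add_smul hB hr hJB hb
  · rintro ⟨x, hx, rfl⟩
    obtain ⟨m, hm, hxm⟩ := hJA x
    obtain ⟨n, hn, hyn⟩ := hJB ((2 : ℝ) • JA x - x)
    have hJB_eq : JB ((2 : ℝ) • JA x - x) = JA x := hx
    rw [hJB_eq] at hn hyn
    have hnm : r • n = r • -m := by
      rw [smul_neg, ← add_right_inj (JA x), ← hyn]
      nth_rewrite 2 [hxm]; module
    exact ⟨m, hm, n, hn, by rw [smul_right_injective H hr.ne' hnm, add_neg_cancel]⟩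
end

section
/- Let β ∈ (0,1) and (r_k) be defined by r_0 ∈ (0, 2(1−β)/β) and r_{k+1} = r_k / √(1 + 2 r_k (1−β)/β). Then lim_{k→∞} (k+1)·r_k = β/(1−β); in particular r_k = O(1/k). -/
/-!
Writing `c = (1 - β) / β`, rationalizing the recursion gives
`1 / r (k + 1) - 1 / r k = 2 c / (√(1 + 2 c r k) + 1)`.
These increments are bounded below (since `r` decreases), so `1 / r k → ∞` and `r k → 0`; hence they
tend to `c`, and by Cesàro (the discrete Stolz–Cesàro theorem) `1 / (k r k) → c`.
-/

open Filter Topology Finset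

theorem tendsto_div_natCast_of_tendsto_sub {u : ℕ → ℝ} {c : ℝ}
    (h : Tendsto (fun k => u (k + 1) - u k) atTop (𝓝 c)) :
    Tendsto (fun n : ℕ => u n / n) atTop (𝓝 c) := by
  have hu0 : Tendsto (fun n : ℕ => (n : ℝ)⁻¹ * u 0) atTop (𝓝 0) := by
    simpa using tendsto_inv_atTop_nhds_zero_nat.mul_const (u 0)
  have hsum := h.cesaro.add hu0
  rw [add_zero] at hsum
  refine hsum.congr fun n => ?_
  rw [sum_range_sub u]
  ring

theorem tendsto_natCast_mul_of_tendsto_inv_sub_inv {r : ℕ → ℝ} {c : ℝ} (hc : c ≠ 0)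
    (h : Tendsto (fun k => (r (k + 1))⁻¹ - (r k)⁻¹) atTop (𝓝 c)) :
    Tendsto (fun n : ℕ => n * r n) atTop (𝓝 c⁻¹) := by
  have hdiv : Tendsto (fun n : ℕ => (r n)⁻¹ / n) atTop (𝓝 c) :=
    tendsto_div_natCast_of_tendsto_sub h
  exact (hdiv.inv₀ hc).congr fun n => by rw [inv_div, div_inv_eq_mul]

theorem tendsto_atTop_of_le_sub {u : ℕ → ℝ} {δ : ℝ} (hδ : 0 < δ)
    (h : ∀ k, δ ≤ u (k + 1) - u k) : Tendsto u atTop atTop := by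
  have hlin : ∀ n : ℕ, u 0 + n * δ ≤ u n := by
    intro n
    induction n with
    | zero => simp
    | succ n ih => push_cast; linarith [h n]
  exact tendsto_atTop_mono hlin <| tendsto_atTop_add_const_left _ _ <|
    tendsto_natCast_atTop_atTop.atTop_mul_const hδ

theorem inv_div_sqrt_sub_inv {x : ℝ} (c : ℝ) (hx : x ≠ 0) (h : 0 ≤ 1 + 2 * c * x) :
    (x / √(1 + 2 * c * x))⁻¹ - x⁻¹ = 2 * c / (√(1 + 2 * c * x) + 1) := by
  have hs := Real.sq_sqrt h
  have hpos : 0 < √(1 + 2 * c * x) + 1 := by positivity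
  rw [inv_div, eq_div_iff hpos.ne']
  field_simp
  linear_combination hs

section SqrtRecursion

variable {c : ℝ} {r : ℕ → ℝ} (hc : 0 < c) (hr0 : 0 < r 0)
  (hrec : ∀ k, r (k + 1) = r k / √(1 + 2 * c * r k))
include hc hr0 hrec

theorem pos_of_sqrt_recursion (k : ℕ) : 0 < r k := by
  induction k with
  | zero => exact hr0
  | succ k ih => rw [hrec]; positivity

theorem antitone_of_sqrt_recursion : Antitone r := by
  refine antitone_nat_of_succ_le fun k => ?_
  have hk := pos_of_sqrt_recursion hc hr0 hrec k
  rw [hrec]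
  exact div_le_self hk.le (Real.one_le_sqrt.mpr (by nlinarith))

theorem inv_sub_inv_of_sqrt_recursion (k : ℕ) :
    (r (k + 1))⁻¹ - (r k)⁻¹ = 2 * c / (√(1 + 2 * c * r k) + 1) := by
  have hk := pos_of_sqrt_recursion hc hr0 hrec k
  rw [hrec]
  exact inv_div_sqrt_sub_inv c hk.ne' (by positivity)

theorem tendsto_zero_of_sqrt_recursion : Tendsto r atTop (𝓝 0) := by
  have hδ : 0 < 2 * c / (√(1 + 2 * c * r 0) + 1) := by positivity
  have hinv : Tendsto (fun k => (r k)⁻¹) atTop atTop := by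
    refine tendsto_atTop_of_le_sub hδ fun k => ?_
    rw [inv_sub_inv_of_sqrt_recursion hc hr0 hrec]
    have hk := antitone_of_sqrt_recursion hc hr0 hrec (Nat.zero_le k)
    gcongr
  simpa [Pi.inv_def] using hinv.inv_tendsto_atTop

theorem tendsto_natCast_mul_of_sqrt_recursion :
    Tendsto (fun n : ℕ => n * r n) atTop (𝓝 c⁻¹) := by
  refine tendsto_natCast_mul_of_tendsto_inv_sub_inv hc.ne' ?_
  simp_rw [inv_sub_inv_of_sqrt_recursion hc hr0 hrec]
  have hsqrt : Tendsto (fun k => √(1 + 2 * c * r k)) atTop (𝓝 1) := by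
    simpa using ((tendsto_zero_of_sqrt_recursion hc hr0 hrec).const_mul (2 * c)).const_add 1 |>.sqrt
  have hlim : Tendsto (fun k => 2 * c / (√(1 + 2 * c * r k) + 1)) atTop (𝓝 (2 * c / (1 + 1))) :=
    tendsto_const_nhds.div (hsqrt.add_const 1) (by norm_num)
  rwa [one_add_one_eq_two, mul_div_cancel_left₀ c two_ne_zero] at hlim

end SqrtRecursion

theorem stmt11 (β : ℝ) (hβ : β ∈ Set.Ioo (0:ℝ) 1) (r : ℕ → ℝ)
    (h0 : r 0 ∈ Set.Ioo 0 (2 * (1 - β) / β))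
    (hrec : ∀ k, r (k + 1) = r k / Real.sqrt (1 + 2 * r k * (1 - β) / β)) :
    Filter.Tendsto (fun k : ℕ => ((k : ℝ) + 1) * r k) Filter.atTop (nhds (β / (1 - β))) ∧
      ∃ C : ℝ, ∀ k : ℕ, 1 ≤ k → r k ≤ C / k := by
  have hc : 0 < (1 - β) / β := div_pos (by linarith [hβ.2]) hβ.1
  have hrec' : ∀ k, r (k + 1) = r k / √(1 + 2 * ((1 - β) / β) * r k) := fun k => by
    rw [hrec]
    ring_nf
  have hlim := tendsto_natCast_mul_of_sqrt_recursion hc h0.1 hrec'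
  rw [inv_div] at hlim
  constructor
  · simpa [add_mul] using hlim.add (tendsto_zero_of_sqrt_recursion hc h0.1 hrec')
  · obtain ⟨C, hC⟩ := hlim.bddAbove_range
    refine ⟨C, fun k hk => ?_⟩
    rw [le_div_iff₀ (by exact_mod_cast hk), mul_comm]
    exact hC (Set.mem_range_self k)
end

section
/- Under the assumptions of the Fejér-type inequality (1/r_{k+1}²)‖x_{k+1}−v‖² + ‖y_{k+1}−v_A‖² ≤ (1/r_k²)‖x_k−v‖² + ‖y_k−v_A‖² for a sequence (r_k) with r_{k+1} = r_k/√(1+2r_k(1−β)/β), r_0 ∈ (0, 2(1−β)/β), β ∈ (0,1), one has ‖x_{k+1} − v‖² ≤ r_{k+1}²·((1/r_0²)‖x_0 − v‖² + ‖y_0 − v_A‖²), and consequently ‖x_{k+1} − v‖ = O(1/k). -/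
open scoped RealInnerProductSpace

variable {H : Type*} [NormedAddCommGroup H] [InnerProductSpace ℝ H] [CompleteSpace H]

/-!
Write `s k = 1 / r k`. The Fejér inequality makes `s k ^ 2 ‖x k - v‖ ^ 2 + ‖y k - vA‖ ^ 2`
nonincreasing, so `‖x k - v‖ ^ 2 ≤ r k ^ 2 M` with `M` its initial value. The step-size rule is
exactly `s (k + 1) ^ 2 = s k ^ 2 + c s k` with `c = 2(1 - β)/β > 0`; since `s k ≥ s 0 > 0`, this
forces `s (k + 1) ≥ s k + δ` with `δ = min (c / 4) (s 0)`, hence `r k = O(1/k)`.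
-/

lemma le_sq_mul_of_inv_sq_mul_add_le {r a b M : ℝ} (hr : 0 < r) (hb : 0 ≤ b)
    (h : r⁻¹ ^ 2 * a + b ≤ M) : a ≤ r ^ 2 * M := by
  calc a = r ^ 2 * (r⁻¹ ^ 2 * a) := by field_simp
    _ ≤ r ^ 2 * M := by gcongr; linarith

lemma inv_div_sqrt_one_add_mul_sq {r c : ℝ} (hr : 0 < r) (hc : 0 ≤ 1 + c * r) :
    (r / √(1 + c * r))⁻¹ ^ 2 = r⁻¹ ^ 2 + c * r⁻¹ := by
  rw [inv_div, div_pow, Real.sq_sqrt hc]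
  field_simp

lemma exists_mul_le_of_sq_add_mul_le {s : ℕ → ℝ} {c : ℝ} (hc : 0 < c) (hs : ∀ k, 0 < s k)
    (hrec : ∀ k, s k ^ 2 + c * s k ≤ s (k + 1) ^ 2) : ∃ δ > 0, ∀ k : ℕ, δ * k ≤ s k := by
  set δ := min (c / 4) (s 0)
  have hδc : δ ≤ c / 4 := min_le_left _ _
  have hδs : δ ≤ s 0 := min_le_right _ _
  have hδ : 0 < δ := lt_min (by positivity) (hs 0)
  suffices h : ∀ k : ℕ, s 0 + δ * k ≤ s k from
    ⟨δ, hδ, fun k => le_trans (by linarith [hs 0]) (h k)⟩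
  intro k
  induction k with
  | zero => simp
  | succ n ih =>
    have hsn : δ ≤ s n := by nlinarith [Nat.cast_nonneg (α := ℝ) n]
    -- `2 δ s + δ² ≤ c s` because `δ ≤ c / 4` and `δ ≤ s`
    have hstep : s n + δ ≤ s (n + 1) := by
      rw [← pow_le_pow_iff_left₀ (by linarith) (hs (n + 1)).le two_ne_zero]
      nlinarith [hrec n]
    push_cast
    linarith

lemma le_div_of_sq_le_sq_mul {a r M δ t : ℝ} (ha : 0 ≤ a) (hr : 0 < r) (hδ : 0 < δ) (ht : 0 < t)
    (h : a ^ 2 ≤ r ^ 2 * M) (hrt : δ * t ≤ r⁻¹) : a ≤ √M / δ / t := by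
  have ha' : a ≤ r * √M := by
    rw [← Real.sqrt_sq ha, ← Real.sqrt_sq hr.le, ← Real.sqrt_mul (sq_nonneg r)]
    exact Real.sqrt_le_sqrt h
  have hr' : r ≤ 1 / (δ * t) := by
    rw [le_div_iff₀ (by positivity), ← le_inv_mul_iff₀ hr, mul_one]
    exact hrt
  calc a ≤ r * √M := ha'
    _ ≤ 1 / (δ * t) * √M := by gcongr
    _ = √M / δ / t := by field_simp

theorem stmt13_general (β : ℝ) (hβ : β ∈ Set.Ioo (0:ℝ) 1) (r : ℕ → ℝ)
    (hpos : ∀ k, 0 < r k)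
    (hrec : ∀ k, r (k + 1) = r k / Real.sqrt (1 + 2 * r k * (1 - β) / β))
    (x y : ℕ → H) (v vA : H)
    (h : ∀ k, ((r (k + 1))⁻¹) ^ 2 * ‖x (k + 1) - v‖ ^ 2 + ‖y (k + 1) - vA‖ ^ 2 ≤
      ((r k)⁻¹) ^ 2 * ‖x k - v‖ ^ 2 + ‖y k - vA‖ ^ 2) :
    (∀ k, ‖x (k + 1) - v‖ ^ 2 ≤
        (r (k + 1)) ^ 2 * (((r 0)⁻¹) ^ 2 * ‖x 0 - v‖ ^ 2 + ‖y 0 - vA‖ ^ 2)) ∧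
      ∃ C : ℝ, ∀ k : ℕ, 1 ≤ k → ‖x (k + 1) - v‖ ≤ C / k := by
  obtain ⟨hβ0, hβ1⟩ := hβ
  set M := ((r 0)⁻¹) ^ 2 * ‖x 0 - v‖ ^ 2 + ‖y 0 - vA‖ ^ 2
  have hfejer : Antitone fun k => (r k)⁻¹ ^ 2 * ‖x k - v‖ ^ 2 + ‖y k - vA‖ ^ 2 :=
    antitone_nat_of_succ_le h
  have hbound : ∀ k, ‖x k - v‖ ^ 2 ≤ r k ^ 2 * M := fun k =>
    le_sq_mul_of_inv_sq_mul_add_le (hpos k) (sq_nonneg _) (hfejer (Nat.zero_le k))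
  refine ⟨fun k => hbound (k + 1), ?_⟩
  set c := 2 * (1 - β) / β
  have hc : 0 < c := div_pos (by linarith) hβ0
  have hinv : ∀ k, (r k)⁻¹ ^ 2 + c * (r k)⁻¹ ≤ (r (k + 1))⁻¹ ^ 2 := fun k => by
    have hrk := hpos k
    have hrec' : r (k + 1) = r k / √(1 + c * r k) := by rw [hrec k, mul_right_comm, mul_div_right_comm]
    rw [hrec', inv_div_sqrt_one_add_mul_sq hrk (by positivity)]
  obtain ⟨δ, hδ, hgrow⟩ :=
    exists_mul_le_of_sq_add_mul_le hc (fun k => inv_pos.2 (hpos k)) hinv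
  refine ⟨√M / δ, fun k hk => ?_⟩
  have hk' : (0 : ℝ) < k := by exact_mod_cast hk
  refine le_div_of_sq_le_sq_mul (norm_nonneg _) (hpos (k + 1)) hδ hk' (hbound (k + 1)) ?_
  calc δ * k ≤ δ * (k + 1 : ℕ) := by gcongr; linarith
    _ ≤ (r (k + 1))⁻¹ := hgrow (k + 1)

theorem stmt13 (β : ℝ) (hβ : β ∈ Set.Ioo (0:ℝ) 1) (r : ℕ → ℝ)
    (h0 : r 0 ∈ Set.Ioo 0 (2 * (1 - β) / β)) (hpos : ∀ k, 0 < r k)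
    (hrec : ∀ k, r (k + 1) = r k / Real.sqrt (1 + 2 * r k * (1 - β) / β))
    (x y : ℕ → H) (v vA : H)
    (h : ∀ k, ((r (k + 1))⁻¹) ^ 2 * ‖x (k + 1) - v‖ ^ 2 + ‖y (k + 1) - vA‖ ^ 2 ≤
      ((r k)⁻¹) ^ 2 * ‖x k - v‖ ^ 2 + ‖y k - vA‖ ^ 2) :
    (∀ k, ‖x (k + 1) - v‖ ^ 2 ≤
        (r (k + 1)) ^ 2 * (((r 0)⁻¹) ^ 2 * ‖x 0 - v‖ ^ 2 + ‖y 0 - vA‖ ^ 2)) ∧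
      ∃ C : ℝ, ∀ k : ℕ, 1 ≤ k → ‖x (k + 1) - v‖ ≤ C / k :=
  stmt13_general β hβ r hpos hrec x y v vA h
end

section
/- Let H be a real Hilbert space, A, B maximal monotone on H, z ∈ H, β ∈ (0,1), r > 0. Define the constant-parameter iteration x_k = J_{r(A_z)^{(β)}}(z_{k-1} + r y_{k-1}), y_k = (1/r)(z_{k-1} + r y_{k-1} − x_k), z_k = J_{r(B_z)^{(β)}}(x_k − r y_k), and set u_{k+1} := z_k + r y_k. Then u_{k+1} = u_k + J_{r(B_z)^{(β)}}((2J_{r(A_z)^{(β)}} − I)(u_k)) − J_{r(A_z)^{(β)}}(u_k), i.e., the auxiliary sequence (u_k) follows a Douglas–Rachford iteration. -/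
open scoped RealInnerProductSpace

variable {H : Type*} [NormedAddCommGroup H] [InnerProductSpace ℝ H] [CompleteSpace H]

theorem primalDual_step_eq_douglasRachford {K E : Type*} [DivisionRing K] [AddCommGroup E]
    [Module K E] {r : K} (hr : r ≠ 0) (JA JB : E → E) {u x y w : E}
    (hx : x = JA u) (hy : y = r⁻¹ • (u - x)) (hw : w = JB (x - r • y)) :
    w + r • y = u + JB ((2 : K) • JA u - u) - JA u := by
  have hry : r • y = u - x := by rw [hy, smul_inv_smul₀ hr]
  have hreflect : x - r • y = (2 : K) • JA u - u := by
    rw [hry, hx, two_smul]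
    abel
  rw [hw, hreflect, hry, hx]
  abel

theorem stmt17_general (r : ℝ) (hr : 0 < r) (JA JB : H → H)
    (x y w u : ℕ → H)
    (hx : ∀ k, x (k + 1) = JA (w k + r • y k))
    (hy : ∀ k, y (k + 1) = r⁻¹ • (w k + r • y k - x (k + 1)))
    (hw : ∀ k, w (k + 1) = JB (x (k + 1) - r • y (k + 1)))
    (hu : ∀ k, u k = w k + r • y k) :
    ∀ k, u (k + 1) = u k + JB ((2:ℝ) • JA (u k) - u k) - JA (u k) := by
  intro k
  rw [hu (k + 1), hu k]
  exact primalDual_step_eq_douglasRachford hr.ne' JA JB (hx k) (hy k) (hw k)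

theorem stmt17 (A B : H → Set H) (hA : MaximalMonotoneOp A) (hB : MaximalMonotoneOp B)
    (z : H) (β r : ℝ) (hβ : β ∈ Set.Ioo (0:ℝ) 1) (hr : 0 < r) (JA JB : H → H)
    (hJA : ∀ q : H, ∃ m ∈ pert A z β (JA q), q = JA q + r • m)
    (hJB : ∀ q : H, ∃ m ∈ pert B z β (JB q), q = JB q + r • m)
    (x y w u : ℕ → H)
    (hx : ∀ k, x (k + 1) = JA (w k + r • y k))
    (hy : ∀ k, y (k + 1) = r⁻¹ • (w k + r • y k - x (k + 1)))
    (hw : ∀ k, w (k + 1) = JB (x (k + 1) - r • y (k + 1)))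
    (hu : ∀ k, u k = w k + r • y k) :
    ∀ k, u (k + 1) = u k + JB ((2:ℝ) • JA (u k) - u k) - JA (u k) :=
  stmt17_general r hr JA JB x y w u hx hy hw hu
end

section
/- Let C, D be nonempty closed convex subsets of a real Hilbert space H with C ∩ D ≠ ∅, and z ∈ H. If z − P_{C∩D}(z) ∈ N_C(P_{C∩D}(z)) + N_D(P_{C∩D}(z)), then J_{N_C + N_D}(z) exists and equals P_{C∩D}(z), i.e., P_{C∩D}(z) is the unique point u with z ∈ u + N_C(u) + N_D(u). -/
attribute [local instance] Classical.propDecidable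

open scoped RealInnerProductSpace

variable {H : Type*} [NormedAddCommGroup H] [InnerProductSpace ℝ H] [CompleteSpace H]

/-- The normal cone of a set `C` at a point `x`. -/
def Ncone (C : Set H) (x : H) : Set H :=
  if x ∈ C then {u : H | ∀ y ∈ C, ⟪u, y - x⟫ ≤ 0} else ∅

/- Uniqueness is monotonicity of `N_C + N_D`: if `z = u + v = u' + v'` with `v ∈ (N_C + N_D) u`
and `v' ∈ (N_C + N_D) u'`, then `0 ≤ ⟪v - v', u - u'⟫ = -‖u - u'‖²`. Existence is the hypothesis. -/

section NormalCone

variable {E : Type*} [NormedAddCommGroup E] [InnerProductSpace ℝ E]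

theorem mem_Ncone_iff {C : Set E} {x a : E} :
    a ∈ Ncone C x ↔ x ∈ C ∧ ∀ y ∈ C, ⟪a, y - x⟫ ≤ 0 := by
  by_cases hx : x ∈ C <;> simp [Ncone, hx]

theorem inner_sub_sub_nonneg_of_mem_Ncone {C : Set E} {x x' a a' : E}
    (ha : a ∈ Ncone C x) (ha' : a' ∈ Ncone C x') : 0 ≤ ⟪a - a', x - x'⟫ := by
  obtain ⟨hx, hax⟩ := mem_Ncone_iff.mp ha
  obtain ⟨hx', hax'⟩ := mem_Ncone_iff.mp ha'
  have h₁ : ⟪a, x' - x⟫ ≤ 0 := hax x' hx'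
  have h₂ : ⟪a', x - x'⟫ ≤ 0 := hax' x hx
  rw [← neg_sub x x', inner_neg_right] at h₁
  rw [inner_sub_left]
  linarith

theorem inner_add_sub_add_nonneg_of_mem_Ncone {C D : Set E} {x x' a a' b b' : E}
    (ha : a ∈ Ncone C x) (hb : b ∈ Ncone D x) (ha' : a' ∈ Ncone C x') (hb' : b' ∈ Ncone D x') :
    0 ≤ ⟪(a + b) - (a' + b'), x - x'⟫ := by
  rw [add_sub_add_comm, inner_add_left]
  exact add_nonneg (inner_sub_sub_nonneg_of_mem_Ncone ha ha')
    (inner_sub_sub_nonneg_of_mem_Ncone hb hb')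

theorem eq_of_add_eq_add_of_inner_sub_nonneg {u u' v v' : E} (h : u + v = u' + v')
    (hmono : 0 ≤ ⟪v - v', u - u'⟫) : u = u' := by
  have hv : v - v' = -(u - u') := by
    rw [neg_sub, sub_eq_sub_iff_add_eq_add, add_comm v, h, add_comm]
  rw [hv, inner_neg_left, neg_nonneg, real_inner_self_nonpos, sub_eq_zero] at hmono
  exact hmono

end NormalCone

theorem stmt19_general (C D : Set H) (z P : H)
    (h : ∃ a ∈ Ncone C P, ∃ b ∈ Ncone D P, z - P = a + b) :
    (∃ a ∈ Ncone C P, ∃ b ∈ Ncone D P, z = P + a + b) ∧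
      ∀ u : H, (∃ a ∈ Ncone C u, ∃ b ∈ Ncone D u, z = u + a + b) → u = P := by
  obtain ⟨a', ha', b', hb', hz⟩ := h
  refine ⟨⟨a', ha', b', hb', by rw [add_assoc, ← hz, add_sub_cancel]⟩, ?_⟩
  rintro u ⟨a, ha, b, hb, rfl⟩
  refine eq_of_add_eq_add_of_inner_sub_nonneg (v := a + b) (v' := a' + b') ?_
    (inner_add_sub_add_nonneg_of_mem_Ncone ha hb ha' hb')
  rw [← hz]
  abel

theorem stmt19 (C D : Set H) (hCne : C.Nonempty) (hCcl : IsClosed C) (hCcv : Convex ℝ C)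
    (hDne : D.Nonempty) (hDcl : IsClosed D) (hDcv : Convex ℝ D)
    (hCD : (C ∩ D).Nonempty) (z P : H)
    (hP : P ∈ C ∩ D ∧ ∀ w ∈ C ∩ D, ‖z - P‖ ≤ ‖z - w‖)
    (h : ∃ a ∈ Ncone C P, ∃ b ∈ Ncone D P, z - P = a + b) :
    (∃ a ∈ Ncone C P, ∃ b ∈ Ncone D P, z = P + a + b) ∧
      ∀ u : H, (∃ a ∈ Ncone C u, ∃ b ∈ Ncone D u, z = u + a + b) → u = P :=
  stmt19_general C D z P h
end
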